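/- arXiv:2406.10738 — 5 statements merged into one kernel-verified Lean document; each statement's English description precedes it below -/
import Mathlib

section
/- Let Z ∈ ℝ^{T×d} with V := Z^⊤Z positive definite, let S ∈ ℝ^{T×d}, let Γ ∈ ℝ^{d×d} be invertible, and suppose Γ̂ := Γ + V^{-1} Z^⊤ S is invertible. Then for every θ ∈ ℝ^d and w ∈ ℝ^d, |w^⊤(Γ̂^{-1} − Γ^{-1}) Γ θ| ≤ √(w^⊤(Γ̂^⊤ V Γ̂)^{-1} w) · ‖V^{-1/2} Z^⊤ S‖_op · ‖θ‖₂. -/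
/-! With `R = V^{1/2}` (symmetric, `R * R = V`), `A = Γ̂⁻¹ R⁻¹` and `B = R⁻¹ Zᵀ S`, the error is
`(Γ̂⁻¹ - Γ⁻¹) Γ = Γ̂⁻¹ (Γ - Γ̂) = -A B` and the Gram matrix inverts to `(Γ̂ᵀ V Γ̂)⁻¹ = A Aᵀ`.
The bound is then Cauchy–Schwarz for `⟪Aᵀ w, B θ⟫` followed by `‖B θ‖ ≤ ‖B‖_op ‖θ‖`. -/

open Matrix

/-- The ℓ₂ operator norm of a square real matrix. -/
noncomputable def l2OpNorm {d : ℕ} (M : Matrix (Fin d) (Fin d) ℝ) : ℝ :=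
  ‖Matrix.toEuclideanCLM (𝕜 := ℝ) M‖

open Classical in
/-- The positive semidefinite square root of a matrix (junk value `0` if the matrix is not
positive semidefinite). -/
noncomputable def matSqrt {d : ℕ} (M : Matrix (Fin d) (Fin d) ℝ) : Matrix (Fin d) (Fin d) ℝ :=
  if h : M.PosSemidef then
    (h.1.eigenvectorUnitary : Matrix (Fin d) (Fin d) ℝ) *
      diagonal ((↑) ∘ Real.sqrt ∘ h.1.eigenvalues) *
      (star h.1.eigenvectorUnitary : Matrix (Fin d) (Fin d) ℝ)
  else 0

section EuclideanNorm

variable {n : Type*} [Fintype n]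

lemma norm_toLp_eq_sqrt_sum_sq (v : n → ℝ) : ‖WithLp.toLp 2 v‖ = √(∑ i, v i ^ 2) := by
  simp [EuclideanSpace.norm_eq, sq_abs]

lemma abs_dotProduct_le_sqrt_mul_sqrt (u v : n → ℝ) :
    |u ⬝ᵥ v| ≤ √(∑ i, u i ^ 2) * √(∑ i, v i ^ 2) := by
  have h := abs_real_inner_le_norm (WithLp.toLp 2 u) (WithLp.toLp 2 v)
  rwa [norm_toLp_eq_sqrt_sum_sq, norm_toLp_eq_sqrt_sum_sq, EuclideanSpace.inner_toLp_toLp,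
    star_trivial, dotProduct_comm] at h

end EuclideanNorm

lemma sqrt_sum_sq_mulVec_le_l2OpNorm_mul {d : ℕ} (M : Matrix (Fin d) (Fin d) ℝ) (v : Fin d → ℝ) :
    √(∑ i, (M *ᵥ v) i ^ 2) ≤ l2OpNorm M * √(∑ i, v i ^ 2) := by
  have h := (toEuclideanCLM (𝕜 := ℝ) M).le_opNorm (WithLp.toLp 2 v)
  rwa [toEuclideanCLM_toLp, norm_toLp_eq_sqrt_sum_sq, norm_toLp_eq_sqrt_sum_sq] at h

lemma dotProduct_mul_mulVec {α l m n : Type*} [CommSemiring α] [Fintype l] [Fintype m]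
    [Fintype n] (u : l → α) (M : Matrix l m α) (N : Matrix m n α) (v : n → α) :
    u ⬝ᵥ (M * N) *ᵥ v = (Mᵀ *ᵥ u) ⬝ᵥ (N *ᵥ v) := by
  rw [← mulVec_mulVec, dotProduct_mulVec, mulVec_transpose]

lemma dotProduct_mul_transpose_mulVec_self {m n : Type*} [Fintype m] [Fintype n]
    (A : Matrix m n ℝ) (w : m → ℝ) : w ⬝ᵥ (A * Aᵀ) *ᵥ w = ∑ i, (Aᵀ *ᵥ w) i ^ 2 := by
  rw [dotProduct_mul_mulVec, dotProduct]
  simp only [sq]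

lemma abs_dotProduct_mul_mulVec_le {m : Type*} [Fintype m] {d : ℕ} (A : Matrix m (Fin d) ℝ)
    (B : Matrix (Fin d) (Fin d) ℝ) (w : m → ℝ) (θ : Fin d → ℝ) :
    |w ⬝ᵥ (A * B) *ᵥ θ| ≤ √(w ⬝ᵥ (A * Aᵀ) *ᵥ w) * l2OpNorm B * √(∑ i, θ i ^ 2) := by
  rw [dotProduct_mul_mulVec, dotProduct_mul_transpose_mulVec_self, mul_assoc]
  exact (abs_dotProduct_le_sqrt_mul_sqrt _ _).trans <|
    mul_le_mul_of_nonneg_left (sqrt_sum_sq_mulVec_le_l2OpNorm_mul B θ) (Real.sqrt_nonneg _)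

lemma nonsing_inv_sub_nonsing_inv_mul {n α : Type*} [Fintype n] [DecidableEq n] [CommRing α]
    {A B : Matrix n n α} (hA : IsUnit A.det) (hB : IsUnit B.det) :
    (A⁻¹ - B⁻¹) * B = A⁻¹ * (B - A) := by
  rw [sub_mul, mul_sub, nonsing_inv_mul B hB, nonsing_inv_mul A hA]

section MatSqrt

variable {d : ℕ} {M : Matrix (Fin d) (Fin d) ℝ}

lemma matSqrt_eq (hM : M.PosSemidef) : matSqrt M =
    (hM.1.eigenvectorUnitary : Matrix (Fin d) (Fin d) ℝ) *
      diagonal ((↑) ∘ Real.sqrt ∘ hM.1.eigenvalues) *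
      (star hM.1.eigenvectorUnitary : Matrix (Fin d) (Fin d) ℝ) := by
  rw [matSqrt, dif_pos hM]

lemma matSqrt_mul_self (hM : M.PosSemidef) : matSqrt M * matSqrt M = M := by
  set U : Matrix (Fin d) (Fin d) ℝ := ↑hM.1.eigenvectorUnitary
  set D : Matrix (Fin d) (Fin d) ℝ := diagonal ((↑) ∘ Real.sqrt ∘ hM.1.eigenvalues)
  have hUU : star U * U = 1 := Unitary.coe_star_mul_self _
  have hDD : D * D = diagonal (RCLike.ofReal ∘ hM.1.eigenvalues) := by
    simp only [D, diagonal_mul_diagonal, Function.comp_apply,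
      Real.mul_self_sqrt (hM.eigenvalues_nonneg _)]
    rfl
  conv_rhs => rw [hM.1.spectral_theorem, Unitary.conjStarAlgAut_apply]
  calc matSqrt M * matSqrt M = U * (D * (star U * U) * D) * star U := by
        simp only [matSqrt_eq hM, U, D, Matrix.mul_assoc]
    _ = _ := by rw [hUU, Matrix.mul_one, hDD]

lemma transpose_matSqrt (hM : M.PosSemidef) : (matSqrt M)ᵀ = matSqrt M := by
  simp [matSqrt_eq hM, transpose_mul, star_eq_conjTranspose, Matrix.mul_assoc]

end MatSqrt

theorem gammaHat_inverse_error_bound_general {T d : ℕ} (Z S : Matrix (Fin T) (Fin d) ℝ)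
    (V : Matrix (Fin d) (Fin d) ℝ) (hVpd : V.PosDef)
    (Γ Γhat : Matrix (Fin d) (Fin d) ℝ) (hΓ : IsUnit Γ.det)
    (hΓhat : Γhat = Γ + V⁻¹ * Zᵀ * S) (hΓhatInv : IsUnit Γhat.det)
    (θ w : Fin d → ℝ) :
    |w ⬝ᵥ (((Γhat⁻¹ - Γ⁻¹) * Γ) *ᵥ θ)| ≤
      Real.sqrt (w ⬝ᵥ ((Γhatᵀ * V * Γhat)⁻¹ *ᵥ w))
        * l2OpNorm ((matSqrt V)⁻¹ * Zᵀ * S)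
        * Real.sqrt (∑ i, θ i ^ 2) := by
  set R := matSqrt V
  have hRR : R * R = V := matSqrt_mul_self hVpd.posSemidef
  have hRinvT : R⁻¹ᵀ = R⁻¹ := by rw [transpose_nonsing_inv, transpose_matSqrt hVpd.posSemidef]
  set A := Γhat⁻¹ * R⁻¹
  have hError : (Γhat⁻¹ - Γ⁻¹) * Γ = -(A * (R⁻¹ * Zᵀ * S)) := by
    have hShift : Γ - Γhat = -(V⁻¹ * Zᵀ * S) := by rw [hΓhat, sub_add_cancel_left]
    rw [nonsing_inv_sub_nonsing_inv_mul hΓhatInv hΓ, hShift, ← hRR, Matrix.mul_inv_rev]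
    simp only [A, mul_neg, Matrix.mul_assoc]
  have hGram : (Γhatᵀ * V * Γhat)⁻¹ = A * Aᵀ := by
    rw [← hRR, Matrix.mul_inv_rev, Matrix.mul_inv_rev, Matrix.mul_inv_rev, transpose_mul, hRinvT,
      transpose_nonsing_inv]
    simp only [A, Matrix.mul_assoc]
  rw [hError, neg_mulVec, dotProduct_neg, abs_neg, hGram]
  exact abs_dotProduct_mul_mulVec_le A _ w θ

/-- For `V = Z^⊤Z` positive definite, `Γ` invertible and the least-squares
estimate `Γ̂ = Γ + V^{-1}Z^⊤S` invertible, for every `θ, w ∈ ℝ^d`: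
`|w^⊤(Γ̂^{-1} − Γ^{-1})Γθ| ≤ √(w^⊤(Γ̂^⊤VΓ̂)^{-1}w) ⬝ ‖V^{-1/2}Z^⊤S‖_op ⬝ ‖θ‖₂`. -/
theorem gammaHat_inverse_error_bound {T d : ℕ} (Z S : Matrix (Fin T) (Fin d) ℝ)
    (V : Matrix (Fin d) (Fin d) ℝ) (hV : V = Zᵀ * Z) (hVpd : V.PosDef)
    (Γ Γhat : Matrix (Fin d) (Fin d) ℝ) (hΓ : IsUnit Γ.det)
    (hΓhat : Γhat = Γ + V⁻¹ * Zᵀ * S) (hΓhatInv : IsUnit Γhat.det)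
    (θ w : Fin d → ℝ) :
    |w ⬝ᵥ (((Γhat⁻¹ - Γ⁻¹) * Γ) *ᵥ θ)| ≤
      Real.sqrt (w ⬝ᵥ ((Γhatᵀ * V * Γhat)⁻¹ *ᵥ w))
        * l2OpNorm ((matSqrt V)⁻¹ * Zᵀ * S)
        * Real.sqrt (∑ i, θ i ^ 2) :=
  gammaHat_inverse_error_bound_general Z S V hVpd Γ Γhat hΓ hΓhat hΓhatInv θ w
end

section
/- For every δ ∈ (0, 0.05] and every c ∈ (1, 1.15], setting γ := c·√(log(1/δ)/2), it holds that (1/γ − 1/γ³) · (1/√(2π)) · exp(−γ²/2) ≥ δ. Equivalently, (√2/(c√(log(1/δ))) − 2√2/(c³ (log(1/δ))^{3/2})) · (1/√(2π)) · δ^{c²/4} ≥ δ. Consequently, if W is a standard Gaussian N(0,1) random variable, then P(W ≥ c·√(log(1/δ)/2)) ≥ δ for all δ ∈ (0, 0.05] and c ∈ (1, 1.15]. -/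
/-!
Mills' inequality: `-(x⁻¹ - x⁻³) e^{-x²/2}` has derivative `(1 - 3x⁻⁴) e^{-x²/2} ≤ e^{-x²/2}`,
so integrating over `(γ, ∞)` gives `(γ⁻¹ - γ⁻³) e^{-γ²/2} ≤ ∫_γ^∞ e^{-x²/2}`, i.e. the Gaussian
anti-concentration bound.

With `L = log (1/δ)` and `b = c²/2`, so that `γ² = bL`, the inequality `δ = e^{-L} ≤ …` becomes
`√(2π) (bL)^{3/2} ≤ (bL - 1) e^{(1 - b/2) L}`. Since `(1 - b/2) L ≥ 3/2`, the right side grows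
faster than the left in `L`, so it suffices to check `L = log 20`, where `e^L = 20` and only the
single variable `x = b log 20 ∈ [1.495, 1.984]` remains.
-/

open Real MeasureTheory ProbabilityTheory Filter Set Topology

lemma integrableOn_exp_neg_sq_div_two (s : Set ℝ) :
    IntegrableOn (fun x : ℝ => exp (-x ^ 2 / 2)) s := by
  have h := integrable_exp_neg_mul_sq (b := 1 / 2) (by norm_num)
  refine (h.congr (ae_of_all _ fun x => ?_)).integrableOn
  ring_nf

lemma integrableOn_Ioi_mills_deriv {γ : ℝ} (hγ : 0 < γ) :
    IntegrableOn (fun x => (1 - 3 * (x ^ 4)⁻¹) * exp (-x ^ 2 / 2)) (Ioi γ) := by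
  refine ((integrableOn_exp_neg_sq_div_two _).const_mul (1 + 3 * (γ ^ 4)⁻¹)).mono' ?_ ?_
  · refine ContinuousOn.aestronglyMeasurable (fun x hx => ?_) measurableSet_Ioi
    have hx : x ≠ 0 := (hγ.trans hx).ne'
    fun_prop (disch := positivity)
  · refine (ae_restrict_iff' measurableSet_Ioi).2 (ae_of_all _ fun x hx => ?_)
    have hx4 : (x ^ 4)⁻¹ ≤ (γ ^ 4)⁻¹ := by gcongr; exact hx.le
    rw [norm_mul, norm_of_nonneg (exp_pos _).le, Real.norm_eq_abs]
    gcongr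
    refine abs_le.2 ⟨?_, ?_⟩ <;> nlinarith [inv_nonneg.2 (pow_nonneg (hγ.trans hx).le 4)]

lemma tendsto_mills_atTop :
    Tendsto (fun x => -(x⁻¹ - (x ^ 3)⁻¹) * exp (-x ^ 2 / 2)) atTop (𝓝 0) := by
  have hrat : Tendsto (fun x : ℝ => x⁻¹ - (x ^ 3)⁻¹) atTop (𝓝 0) := by
    simpa using tendsto_inv_atTop_zero.sub
      (tendsto_inv_atTop_zero.comp (tendsto_pow_atTop (α := ℝ) (n := 3) (by norm_num)))
  have hexp : Tendsto (fun x : ℝ => exp (-x ^ 2 / 2)) atTop (𝓝 0) := by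
    refine tendsto_exp_atBot.comp ?_
    simpa [neg_div] using ((tendsto_pow_atTop (α := ℝ) (n := 2) (by norm_num)).atTop_div_const
      (by norm_num : (0 : ℝ) < 2))
  simpa using hrat.neg.mul hexp

lemma hasDerivAt_mills (x : ℝ) (hx : x ≠ 0) :
    HasDerivAt (fun y => -(y⁻¹ - (y ^ 3)⁻¹) * exp (-y ^ 2 / 2))
      ((1 - 3 * (x ^ 4)⁻¹) * exp (-x ^ 2 / 2)) x := by
  have hinv : HasDerivAt (fun y : ℝ => y⁻¹ - (y ^ 3)⁻¹) (-(x ^ 2)⁻¹ + 3 * (x ^ 4)⁻¹) x :=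
    ((hasDerivAt_inv hx).sub ((hasDerivAt_pow 3 x).inv (pow_ne_zero 3 hx))).congr_deriv (by
      field_simp; ring)
  have hexp : HasDerivAt (fun y : ℝ => exp (-y ^ 2 / 2)) (-x * exp (-x ^ 2 / 2)) x :=
    ((hasDerivAt_pow 2 x).neg.div_const 2).exp.congr_deriv (by
      simp only [Pi.neg_apply, Nat.cast_ofNat, Nat.add_one_sub_one, pow_one, neg_mul]; ring)
  exact (hinv.neg.mul hexp).congr_deriv (by simp only [Pi.neg_apply]; field_simp; ring)

lemma mills_le_integral_Ioi {γ : ℝ} (hγ : 0 < γ) :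
    (γ⁻¹ - (γ ^ 3)⁻¹) * exp (-γ ^ 2 / 2) ≤ ∫ x in Ioi γ, exp (-x ^ 2 / 2) := by
  have hftc := integral_Ioi_of_hasDerivAt_of_tendsto'
    (fun x hx => hasDerivAt_mills x (hγ.trans_le hx).ne') (integrableOn_Ioi_mills_deriv hγ)
    tendsto_mills_atTop
  calc (γ⁻¹ - (γ ^ 3)⁻¹) * exp (-γ ^ 2 / 2)
      = ∫ x in Ioi γ, (1 - 3 * (x ^ 4)⁻¹) * exp (-x ^ 2 / 2) := by rw [hftc]; ring
    _ ≤ ∫ x in Ioi γ, exp (-x ^ 2 / 2) := by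
      refine setIntegral_mono_on (integrableOn_Ioi_mills_deriv hγ)
        (integrableOn_exp_neg_sq_div_two _) measurableSet_Ioi fun x hx => ?_
      have hx4 : 0 ≤ (x ^ 4)⁻¹ := by have : 0 < x := hγ.trans hx; positivity
      nlinarith [exp_pos (-x ^ 2 / 2)]

noncomputable def gaussianTailLowerBound (γ : ℝ) : ℝ :=
  (1 / γ - 1 / γ ^ 3) * (1 / √(2 * π)) * exp (-γ ^ 2 / 2)

lemma ofReal_gaussianTailLowerBound_le_gaussianReal_Ici {γ : ℝ} (hγ : 0 < γ) :
    ENNReal.ofReal (gaussianTailLowerBound γ) ≤ gaussianReal 0 1 (Ici γ) := by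
  rw [gaussianReal_apply_eq_integral 0 one_ne_zero, integral_Ici_eq_integral_Ioi]
  refine ENNReal.ofReal_le_ofReal ?_
  have hpdf : ∀ x, gaussianPDFReal 0 1 x = (√(2 * π))⁻¹ * exp (-x ^ 2 / 2) := by
    intro x; simp [gaussianPDFReal]
  simp_rw [hpdf, integral_const_mul, gaussianTailLowerBound]
  rw [one_div, one_div, one_div, mul_comm _ (√(2 * π))⁻¹, mul_assoc]
  gcongr
  exact mills_le_integral_Ioi hγ

lemma exp_three_eq : exp 3 = exp 1 ^ 3 := by rw [← exp_nat_mul]; norm_num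

lemma exp_three_lt : exp 3 < 20.2 := by
  calc exp 3 = exp 1 ^ 3 := exp_three_eq
    _ < 2.7182818286 ^ 3 := by gcongr; exact exp_one_lt_d9
    _ < 20.2 := by norm_num

lemma log_twenty_lt_three : log 20 < 3 := by
  rw [log_lt_iff_lt_exp (by norm_num), exp_three_eq]
  calc (20 : ℝ) < 2.7182818283 ^ 3 := by norm_num
    _ < exp 1 ^ 3 := by gcongr; exact exp_one_gt_d9

lemma lt_log_twenty : 2.99 < log 20 := by
  rw [lt_log_iff_exp_lt (by norm_num)]
  have h : exp 2.99 * exp 0.01 = exp 3 := by rw [← exp_add]; norm_num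
  nlinarith [add_one_le_exp (0.01 : ℝ), exp_pos 2.99, exp_three_lt]

lemma exp_seven_fourths_lt : exp (7 / 4) < 5.755 := by
  have h : exp (7 / 4) ^ 4 = exp 1 ^ 7 := by rw [← exp_nat_mul, ← exp_nat_mul]; norm_num
  have h7 : exp 1 ^ 7 < 5.755 ^ 4 := by
    calc exp 1 ^ 7 < 2.7182818286 ^ 7 := by gcongr; exact exp_one_lt_d9
      _ < 5.755 ^ 4 := by norm_num
  exact lt_of_pow_lt_pow_left₀ 4 (by norm_num) (h ▸ h7)

-- The tangent line of `exp` at `-7/4` reduces this to a cubic inequality, with about 1% to spare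
-- at `x = 1.495`.
lemma two_pi_mul_pow_three_le {x : ℝ} (h1 : 1.495 ≤ x) (h2 : x ≤ 1.984) :
    2 * π * x ^ 3 ≤ 400 * (x - 1) ^ 2 * exp (-x) := by
  have htangent : (11 / 4 - x) / 5.755 ≤ exp (-x) := by
    have h : exp (-x) = exp (7 / 4 - x) / exp (7 / 4) := by rw [← exp_sub]; ring_nf
    rw [h]
    gcongr
    · linarith [add_one_le_exp (7 / 4 - x)]
    · exact exp_seven_fourths_lt.le
  have hpoly : 2 * 3.1416 * x ^ 3 * 5.755 ≤ 400 * (x - 1) ^ 2 * (11 / 4 - x) := by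
    have hmid : 0 ≤ (x - 1.495) * (1.984 - x) := mul_nonneg (by linarith) (by linarith)
    nlinarith [mul_nonneg hmid (by linarith : (0 : ℝ) ≤ x - 1.495), sq_nonneg (x - 1.6)]
  calc 2 * π * x ^ 3 ≤ 2 * 3.1416 * x ^ 3 := by gcongr; exact pi_lt_d4.le
    _ ≤ 400 * (x - 1) ^ 2 * ((11 / 4 - x) / 5.755) := by
      rw [mul_div_assoc', le_div_iff₀ (by norm_num)]; exact hpoly
    _ ≤ 400 * (x - 1) ^ 2 * exp (-x) := by gcongr

lemma rpow_le_exp_mul_sub_one {w p : ℝ} (hw : 0 ≤ w) (hp : 0 ≤ p) :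
    w ^ p ≤ exp (p * (w - 1)) := by
  rw [mul_comm, exp_mul]
  gcongr
  linarith [add_one_le_exp (w - 1)]

lemma mul_rpow_le_mul_exp_of_le {K b L₀ L : ℝ} (hb : 0 < b) (hbL₀ : 1 ≤ b * L₀)
    (ha : 3 / 2 ≤ (1 - b / 2) * L₀) (hL : L₀ ≤ L)
    (h₀ : K * (b * L₀) ^ (3 / 2 : ℝ) ≤ (b * L₀ - 1) * exp (L₀ - b * L₀ / 2)) :
    K * (b * L) ^ (3 / 2 : ℝ) ≤ (b * L - 1) * exp (L - b * L / 2) := by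
  have hL₀ : 0 < L₀ := pos_of_mul_pos_right (by linarith) hb.le
  set w := L / L₀
  have hw : 1 ≤ w := (one_le_div hL₀).2 hL
  have hL_eq : L = w * L₀ := (div_mul_cancel₀ L hL₀.ne').symm
  have hgrowth : w ^ (3 / 2 : ℝ) ≤ exp ((1 - b / 2) * (L - L₀)) :=
    calc w ^ (3 / 2 : ℝ) ≤ exp (3 / 2 * (w - 1)) :=
          rpow_le_exp_mul_sub_one (by linarith) (by norm_num)
      _ ≤ exp ((1 - b / 2) * (L - L₀)) := by
        rw [exp_le_exp, hL_eq]; nlinarith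
  calc K * (b * L) ^ (3 / 2 : ℝ) = w ^ (3 / 2 : ℝ) * (K * (b * L₀) ^ (3 / 2 : ℝ)) := by
        rw [hL_eq, mul_left_comm, mul_rpow (by linarith) (by positivity)]; ring
    _ ≤ w ^ (3 / 2 : ℝ) * ((b * L₀ - 1) * exp (L₀ - b * L₀ / 2)) := by gcongr
    _ ≤ exp ((1 - b / 2) * (L - L₀)) * ((b * L₀ - 1) * exp (L₀ - b * L₀ / 2)) := by
        gcongr
    _ = (b * L₀ - 1) * exp (L - b * L / 2) := by
        rw [mul_left_comm, ← exp_add]; ring_nf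
    _ ≤ (b * L - 1) * exp (L - b * L / 2) := by gcongr

lemma sqrt_two_pi_mul_rpow_le {b L : ℝ} (hb : 1 / 2 ≤ b) (hb' : b ≤ 0.66125)
    (hL : log 20 ≤ L) :
    √(2 * π) * (b * L) ^ (3 / 2 : ℝ) ≤ (b * L - 1) * exp (L - b * L / 2) := by
  have hlog_gt := lt_log_twenty
  have hlog_lt := log_twenty_lt_three
  refine mul_rpow_le_mul_exp_of_le (by linarith) (by nlinarith) (by nlinarith) hL ?_
  set x := b * log 20
  have hx1 : 1.495 ≤ x := by nlinarith
  have hx2 : x ≤ 1.984 := by nlinarith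
  have hexp : exp (log 20 - x / 2) ^ 2 = 400 * exp (-x) := by
    rw [sub_eq_add_neg, exp_add, exp_log (by norm_num), mul_pow, ← exp_nat_mul]
    ring_nf
  have hpow : (x ^ (3 / 2 : ℝ)) ^ 2 = x ^ 3 := by
    rw [← rpow_natCast, ← rpow_mul (by linarith)]; norm_num
  rw [← pow_le_pow_iff_left₀ (by positivity) (by have := exp_pos (log 20 - x / 2); nlinarith)
    two_ne_zero, mul_pow, mul_pow, sq_sqrt (by positivity), hpow, hexp]
  linarith [two_pi_mul_pow_three_le hx1 hx2]

lemma exp_neg_le_gaussianTailLowerBound_of_le {γ L : ℝ} (hγ : 0 < γ)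
    (h : √(2 * π) * γ ^ 3 ≤ (γ ^ 2 - 1) * exp (L - γ ^ 2 / 2)) :
    exp (-L) ≤ gaussianTailLowerBound γ := by
  have hbound : gaussianTailLowerBound γ
      = (γ ^ 2 - 1) * exp (-γ ^ 2 / 2) / (√(2 * π) * γ ^ 3) := by
    rw [gaussianTailLowerBound]; field_simp
  rw [hbound, le_div_iff₀ (by positivity)]
  calc exp (-L) * (√(2 * π) * γ ^ 3)
      ≤ exp (-L) * ((γ ^ 2 - 1) * exp (L - γ ^ 2 / 2)) := by gcongr
    _ = (γ ^ 2 - 1) * exp (-γ ^ 2 / 2) := by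
      rw [mul_left_comm, ← exp_add]; ring_nf

lemma exp_neg_le_gaussianTailLowerBound {c L : ℝ} (hc1 : 1 < c) (hc : c ≤ 1.15)
    (hL : log 20 ≤ L) :
    exp (-L) ≤ gaussianTailLowerBound (c * √(L / 2)) := by
  have hL0 : 0 < L := (log_pos (by norm_num)).trans_le hL
  set γ := c * √(L / 2)
  have hγ : 0 < γ := by positivity
  have hsq : γ ^ 2 = c ^ 2 / 2 * L := by
    rw [mul_pow, sq_sqrt (by positivity)]; ring
  have hcube : (c ^ 2 / 2 * L) ^ (3 / 2 : ℝ) = γ ^ 3 := by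
    rw [← hsq, ← rpow_natCast, ← rpow_mul hγ.le]; norm_num
  refine exp_neg_le_gaussianTailLowerBound_of_le hγ ?_
  have := sqrt_two_pi_mul_rpow_le (b := c ^ 2 / 2) (by nlinarith) (by nlinarith) hL
  rwa [hcube, ← hsq] at this

lemma gaussianTailLowerBound_mul_sqrt_half {c L : ℝ} (hc : 0 < c) (hL : 0 < L) :
    gaussianTailLowerBound (c * √(L / 2)) =
      (√2 / (c * √L) - 2 * √2 / (c ^ 3 * L ^ (3 / 2 : ℝ))) * (1 / √(2 * π))
        * exp (-L) ^ (c ^ 2 / 4) := by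
  have hL32 : L ^ (3 / 2 : ℝ) = √L ^ 3 := by
    rw [sqrt_eq_rpow, ← rpow_natCast, ← rpow_mul hL.le]; norm_num
  have h2 : √2 ^ 3 = 2 * √2 := by
    rw [pow_succ, sq_sqrt zero_le_two]
  rw [gaussianTailLowerBound, ← exp_mul, sqrt_div hL.le, hL32, ← h2]
  congr 2
  · field_simp
  · rw [mul_pow, div_pow, sq_sqrt hL.le, sq_sqrt zero_le_two]; ring_nf

/-- For every `δ ∈ (0, 0.05]` and `c ∈ (1, 1.15]`, with
`γ := c √(log(1/δ)/2)`: the Gaussian anti-concentration quantity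
`(1/γ − 1/γ³) (1/√(2π)) exp(−γ²/2)` is at least `δ`; equivalently
`(√2/(c√log(1/δ)) − 2√2/(c³ log(1/δ)^{3/2})) (1/√(2π)) δ^{c²/4} ≥ δ`; and consequently a
standard Gaussian `W` satisfies `P(W ≥ γ) ≥ δ`. -/
theorem gaussian_anticoncentration_delta (δ c : ℝ) (hδ0 : 0 < δ) (hδ : δ ≤ 0.05)
    (hc1 : 1 < c) (hc : c ≤ 1.15) :
    (1 / (c * Real.sqrt (Real.log (1 / δ) / 2))
        - 1 / (c * Real.sqrt (Real.log (1 / δ) / 2)) ^ 3)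
      * (1 / Real.sqrt (2 * Real.pi))
      * Real.exp (-(c * Real.sqrt (Real.log (1 / δ) / 2)) ^ 2 / 2) ≥ δ
    ∧ (Real.sqrt 2 / (c * Real.sqrt (Real.log (1 / δ)))
        - 2 * Real.sqrt 2 / (c ^ 3 * Real.log (1 / δ) ^ ((3 : ℝ) / 2)))
      * (1 / Real.sqrt (2 * Real.pi)) * δ ^ (c ^ 2 / 4) ≥ δ
    ∧ ENNReal.ofReal δ ≤
        gaussianReal 0 1 {x | c * Real.sqrt (Real.log (1 / δ) / 2) ≤ x} := by
  have hδL : exp (-log (1 / δ)) = δ := by rw [one_div, log_inv, neg_neg, exp_log hδ0]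
  have hL : log 20 ≤ log (1 / δ) :=
    log_le_log (by norm_num) (by rw [le_div_iff₀ hδ0]; linarith)
  have hbound := exp_neg_le_gaussianTailLowerBound hc1 hc hL
  have hc0 : 0 < c := by linarith
  have hL0 : 0 < log (1 / δ) := (log_pos (by norm_num)).trans_le hL
  have hrewrite := gaussianTailLowerBound_mul_sqrt_half hc0 hL0
  rw [hδL] at hbound hrewrite
  refine ⟨hbound, hrewrite ▸ hbound, ?_⟩
  exact (ENNReal.ofReal_le_ofReal hbound).trans
    (ofReal_gaussianTailLowerBound_le_gaussianReal_Ici (by positivity))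
end

section
/- Let d ≥ 2, ε ∈ (0,1), and Γ := ((1−ε)/d)·1_d 1_d^⊤ + ε·I ∈ ℝ^{d×d}. Then Γ is invertible with Γ^{-1} = (1/ε)·(I − ((1−ε)/d)·1_d 1_d^⊤), and for every strictly positive λ ∈ Δ(d), max_{i≠j} (e_i − e_j)^⊤ (Γ^⊤ diag(λ) Γ)^{-1} (e_i − e_j) ≥ d/ε². In particular the infimum over strictly positive λ ∈ Δ(d) of this maximum is at least d/ε². -/
open Matrix

/-- For `Γ = ((1−ε)/d)·1_d 1_d^⊤ + ε·I` with `d ≥ 2` and `ε ∈ (0,1)`: `Γ` is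
invertible with `Γ^{-1} = (1/ε)·(I − ((1−ε)/d)·1_d 1_d^⊤)`; for every strictly positive design
`λ ∈ Δ(d)`, `max_{i≠j} ‖e_i − e_j‖²_{(Γ^⊤ diag(λ) Γ)^{-1}} ≥ d/ε²`; and hence the infimum over
strictly positive designs of this maximum is at least `d/ε²`. -/
theorem interpolation_instance_hardness {d : ℕ} (hd : 2 ≤ d) (ε : ℝ) (hε : ε ∈ Set.Ioo (0:ℝ) 1)
    (Γ : Matrix (Fin d) (Fin d) ℝ)
    (hΓdef : Γ = ((1 - ε) / d) • vecMulVec (fun _ : Fin d => (1 : ℝ)) (fun _ => 1) + ε • 1) :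
    IsUnit Γ.det
    ∧ Γ⁻¹ = (1 / ε) • ((1 : Matrix (Fin d) (Fin d) ℝ)
        - ((1 - ε) / d) • vecMulVec (fun _ : Fin d => (1 : ℝ)) (fun _ => 1))
    ∧ (∀ lam : Fin d → ℝ, (∀ i, 0 < lam i) → (∑ i, lam i) = 1 →
        d / ε ^ 2 ≤ sSup {v : ℝ | ∃ i j : Fin d, i ≠ j ∧
          v = (Pi.single i 1 - Pi.single j 1) ⬝ᵥ
            ((Γᵀ * diagonal lam * Γ)⁻¹ *ᵥ (Pi.single i 1 - Pi.single j 1))})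
    ∧ d / ε ^ 2 ≤ sInf {r : ℝ | ∃ lam : Fin d → ℝ,
        (∀ i, 0 < lam i) ∧ (∑ i, lam i) = 1 ∧
        r = sSup {v : ℝ | ∃ i j : Fin d, i ≠ j ∧
          v = (Pi.single i 1 - Pi.single j 1) ⬝ᵥ
            ((Γᵀ * diagonal lam * Γ)⁻¹ *ᵥ (Pi.single i 1 - Pi.single j 1))}} := by
  obtain ⟨hε0, hε1⟩ := hε
  have hd0 : (0:ℝ) < d := by positivity
  haveI : Nontrivial (Fin d) := by
    refine Fin.nontrivial_iff_two_le.mpr hd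
  set J : Matrix (Fin d) (Fin d) ℝ := vecMulVec (fun _ : Fin d => (1:ℝ)) (fun _ => 1) with hJ
  have hJJ : J * J = (d:ℝ) • J := by
    ext i j
    simp [hJ, Matrix.mul_apply, vecMulVec_apply, Finset.sum_const, Finset.card_fin]
  set a : ℝ := (1 - ε) / d with ha
  set B : Matrix (Fin d) (Fin d) ℝ := (1 / ε) • ((1 : Matrix (Fin d) (Fin d) ℝ) - a • J)
    with hB
  have hΓB : Γ * B = 1 := by
    rw [hΓdef, hB, Matrix.mul_smul, add_mul, mul_sub, mul_sub, mul_one, mul_one,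
      Matrix.smul_mul, Matrix.mul_smul, Matrix.smul_mul, Matrix.mul_smul, hJJ,
      Matrix.one_mul]
    match_scalars
    · rw [ha]; field_simp; ring
    · field_simp
  have hdet : IsUnit Γ.det := Matrix.isUnit_det_of_right_inverse hΓB
  have hInv : Γ⁻¹ = B := Matrix.inv_eq_right_inv hΓB
  have hΓT : Γᵀ = Γ := by
    rw [hΓdef]; ext i j
    simp [hJ, vecMulVec_apply, Matrix.one_apply, eq_comm]
  have hBT : Bᵀ = B := by
    rw [hB]; ext i j
    simp [hJ, vecMulVec_apply, Matrix.one_apply, eq_comm]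
  -- main quadratic form evaluation
  have hval : ∀ lam : Fin d → ℝ, (∀ k, 0 < lam k) → ∀ i j : Fin d, i ≠ j →
      (Pi.single i 1 - Pi.single j 1) ⬝ᵥ
        ((Γᵀ * diagonal lam * Γ)⁻¹ *ᵥ (Pi.single i 1 - Pi.single j 1))
      = (1 / ε ^ 2) * ((lam i)⁻¹ + (lam j)⁻¹) := by
    intro lam hpos i j hij
    have hDinv : (diagonal lam)⁻¹ = diagonal (fun k => (lam k)⁻¹) :=
      Matrix.inv_eq_right_inv (by
        rw [Matrix.diagonal_mul_diagonal]
        have h1 : (fun k => lam k * (lam k)⁻¹) = fun _ => (1:ℝ) :=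
          funext fun k => mul_inv_cancel₀ (hpos k).ne'
        rw [h1, Matrix.diagonal_one])
    have hMinv : (Γᵀ * diagonal lam * Γ)⁻¹ = B * (diagonal (fun k => (lam k)⁻¹) * B) := by
      rw [Matrix.mul_inv_rev, Matrix.mul_inv_rev, hDinv, hΓT, hInv]
    set u : Fin d → ℝ := Pi.single i 1 - Pi.single j 1 with hu
    have hJu : J *ᵥ u = 0 := by
      ext k
      simp [hJ, hu, Matrix.mulVec, dotProduct, vecMulVec_apply, Pi.sub_apply,
        Finset.sum_sub_distrib]
    have hBu : B *ᵥ u = (1 / ε) • u := by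
      rw [hB, Matrix.smul_mulVec, Matrix.sub_mulVec, Matrix.one_mulVec,
        Matrix.smul_mulVec, hJu, smul_zero, sub_zero]
    have huB : u ᵥ* B = (1 / ε) • u := by
      rw [← hBT, Matrix.vecMul_transpose, hBu]
    rw [hMinv, ← Matrix.mulVec_mulVec, Matrix.dotProduct_mulVec, huB,
      ← Matrix.mulVec_mulVec, hBu, Matrix.mulVec_smul, smul_dotProduct,
      dotProduct_smul, smul_eq_mul, smul_eq_mul]
    have hDu : (Matrix.diagonal fun k => (lam k)⁻¹) *ᵥ u
        = Pi.single i ((lam i)⁻¹) - Pi.single j ((lam j)⁻¹) := by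
      rw [hu, Matrix.mulVec_sub, Matrix.diagonal_mulVec_single, Matrix.diagonal_mulVec_single,
        mul_one, mul_one]
    rw [hDu, hu]
    simp [sub_dotProduct, dotProduct_sub, single_dotProduct,
      Pi.sub_apply, Pi.single_eq_same, Pi.single_eq_of_ne hij, Pi.single_eq_of_ne hij.symm]
    rw [pow_two, mul_inv]
    ring
  have hmax : ∀ lam : Fin d → ℝ, (∀ i, 0 < lam i) → (∑ i, lam i) = 1 →
      d / ε ^ 2 ≤ sSup {v : ℝ | ∃ i j : Fin d, i ≠ j ∧
        v = (Pi.single i 1 - Pi.single j 1) ⬝ᵥ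
          ((Γᵀ * diagonal lam * Γ)⁻¹ *ᵥ (Pi.single i 1 - Pi.single j 1))} := by
    intro lam hpos hsum
    have hbdd : BddAbove {v : ℝ | ∃ i j : Fin d, i ≠ j ∧
        v = (Pi.single i 1 - Pi.single j 1) ⬝ᵥ
          ((Γᵀ * diagonal lam * Γ)⁻¹ *ᵥ (Pi.single i 1 - Pi.single j 1))} := by
      apply Set.Finite.bddAbove
      apply Set.Finite.subset (Set.finite_range (fun p : Fin d × Fin d =>
        (Pi.single p.1 1 - Pi.single p.2 1) ⬝ᵥ
          ((Γᵀ * diagonal lam * Γ)⁻¹ *ᵥ (Pi.single p.1 1 - Pi.single p.2 1))))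
      rintro v ⟨i, j, hij, rfl⟩
      exact ⟨(i, j), rfl⟩
    obtain ⟨i, -, hi⟩ := Finset.exists_min_image Finset.univ lam
      ⟨⟨0, by omega⟩, Finset.mem_univ _⟩
    obtain ⟨j, hj⟩ := exists_ne i
    have hle : d / ε ^ 2 ≤ (Pi.single i 1 - Pi.single j 1) ⬝ᵥ
        ((Γᵀ * diagonal lam * Γ)⁻¹ *ᵥ (Pi.single i 1 - Pi.single j 1)) := by
      rw [hval lam hpos i j (Ne.symm hj)]
      have hdi : (d:ℝ) ≤ (lam i)⁻¹ := by
        have hsum' : (d:ℝ) * lam i ≤ 1 := by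
          have h2 := Finset.card_nsmul_le_sum Finset.univ lam (lam i)
            (fun k _ => hi k (Finset.mem_univ k))
          simpa [Finset.card_univ, nsmul_eq_mul, hsum] using h2
        rw [inv_eq_one_div, le_div_iff₀ (hpos i)]
        linarith
      have hδ : 0 < (lam j)⁻¹ := inv_pos.mpr (hpos j)
      have heq : (d:ℝ) / ε ^ 2 = (1 / ε ^ 2) * d := by ring
      rw [heq]
      have h3 := mul_le_mul_of_nonneg_left
        (by linarith : (d:ℝ) ≤ (lam i)⁻¹ + (lam j)⁻¹)
        (by positivity : (0:ℝ) ≤ 1 / ε ^ 2)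
      linarith
    exact hle.trans (le_csSup hbdd ⟨i, j, Ne.symm hj, rfl⟩)
  refine ⟨hdet, hInv, hmax, ?_⟩
  apply le_csInf
  · refine ⟨_, fun _ => (d:ℝ)⁻¹, fun i => by positivity, ?_, rfl⟩
    rw [Finset.sum_const, Finset.card_univ, Fintype.card_fin, nsmul_eq_mul]
    exact mul_inv_cancel₀ hd0.ne'
  · rintro r ⟨lam, hpos, hsum, rfl⟩
    exact hmax lam hpos hsum
end

section
/- Let a, b, c, d be positive real numbers. Then for every real r, if r ≤ a + b·ln(c + d·r), then r ≤ 2a + 2b·ln(1 + 2c + 2bd). -/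
/-! For `r ≥ 0` and any `κ > 0`, the bound `1 + x ≤ exp x` gives
`c + d r ≤ (c + d/κ) exp (κ r)`, i.e. `log (c + d r) ≤ log (c + d/κ) + κ r`. Choosing `κ = 1/(2b)`
turns the hypothesis into `r ≤ a + b log (c + 2bd) + r/2`. For `r ≤ 0` the claim is trivial, since
`1 + 2c + 2bd > 1` makes the right-hand side positive. -/

open Real

theorem add_mul_le_mul_exp {c d κ r : ℝ} (hc : 0 ≤ c) (hd : 0 ≤ d) (hκ : 0 < κ) (hr : 0 ≤ r) :
    c + d * r ≤ (c + d / κ) * exp (κ * r) :=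
  calc c + d * r ≤ c + d * r + (c * κ * r + d / κ) := by
        have : 0 ≤ c * κ * r := by positivity
        have : 0 ≤ d / κ := by positivity
        linarith
    _ = (c + d / κ) * (κ * r + 1) := by field_simp; ring
    _ ≤ (c + d / κ) * exp (κ * r) :=
        mul_le_mul_of_nonneg_left (add_one_le_exp _) (by positivity)

theorem log_add_mul_le {c d κ r : ℝ} (hc : 0 < c) (hd : 0 ≤ d) (hκ : 0 < κ) (hr : 0 ≤ r) :
    log (c + d * r) ≤ log (c + d / κ) + κ * r := by
  rw [← log_exp (κ * r), ← log_mul (by positivity) (exp_pos _).ne']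
  exact log_le_log (by positivity) (add_mul_le_mul_exp hc.le hd hκ hr)

theorem le_two_mul_add_of_le_add_mul_log {a b c d r : ℝ} (hb : 0 < b) (hc : 0 < c) (hd : 0 ≤ d)
    (hr : 0 ≤ r) (h : r ≤ a + b * log (c + d * r)) :
    r ≤ 2 * a + 2 * b * log (c + 2 * b * d) := by
  have hlog : log (c + d * r) ≤ log (c + 2 * b * d) + r / (2 * b) := by
    convert log_add_mul_le hc hd (inv_pos.2 (by positivity : 0 < 2 * b)) hr using 3 <;>
      field_simp
  have hb_log : b * log (c + d * r) ≤ b * log (c + 2 * b * d) + r / 2 := by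
    have hbr : b * (r / (2 * b)) = r / 2 := by field_simp
    simpa only [mul_add, hbr] using mul_le_mul_of_nonneg_left hlog hb.le
  linarith

/-- For positive reals `a, b, c, d` and every real `r`:
if `r ≤ a + b ln(c + d r)` then `r ≤ 2a + 2b ln(1 + 2c + 2bd)`. -/
theorem log_inequality_inversion (a b c d : ℝ) (ha : 0 < a) (hb : 0 < b) (hc : 0 < c)
    (hd : 0 < d) (r : ℝ) (h : r ≤ a + b * Real.log (c + d * r)) :
    r ≤ 2 * a + 2 * b * Real.log (1 + 2 * c + 2 * b * d) := by
  have hlog_pos : 0 < log (1 + 2 * c + 2 * b * d) := log_pos (by nlinarith [mul_pos hb hd])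
  rcases le_or_gt r 0 with hr | hr
  · linarith [mul_pos hb hlog_pos]
  calc r ≤ 2 * a + 2 * b * log (c + 2 * b * d) :=
        le_two_mul_add_of_le_add_mul_log hb hc hd.le hr.le h
    _ ≤ 2 * a + 2 * b * log (1 + 2 * c + 2 * b * d) := by
        gcongr
        linarith
end

section
/- Let α, β > 0 be real numbers. Then for every real r, if r ≤ α·ln(1 + r) + β, then r ≤ 2α·ln(e + α) + 2β. -/
/-!
Bound `log (1 + r)` by its tangent line at `c = 2 (e + α)`: this turns the hypothesis into
`(1 - α / c) r ≤ α (log c + 1 / c - 1) + β`. The choice of `c` makes `1 - α / c ≥ 1 / 2` and,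
since `log 2 + 1 / c < 1`, `log c + 1 / c - 1 ≤ log (e + α)`.
-/

open Real

theorem Real.log_le_log_add_div_sub_one {x c : ℝ} (hx : 0 < x) (hc : 0 < c) :
    log x ≤ log c + x / c - 1 := by
  have := log_le_sub_one_of_pos (div_pos hx hc)
  rw [log_div hx.ne' hc.ne'] at this
  linarith

theorem one_sub_div_mul_le_of_le_mul_log_one_add {α β c r : ℝ} (hα : 0 ≤ α) (hc : 0 < c)
    (hr : -1 < r) (h : r ≤ α * log (1 + r) + β) :
    (1 - α / c) * r ≤ α * (log c + 1 / c - 1) + β := by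
  have tangent := log_le_log_add_div_sub_one (by linarith : 0 < 1 + r) hc
  have expand : (1 - α / c) * r = r - α * ((1 + r) / c - 1 / c) := by ring
  linarith [mul_le_mul_of_nonneg_left tangent hα]

theorem log_two_mul_add_one_div_sub_one_le {a : ℝ} (ha : 2 ≤ a) :
    log (2 * a) + 1 / (2 * a) - 1 ≤ log a := by
  have hlog2 := log_two_lt_d9
  have hdiv : 1 / (2 * a) ≤ 1 / 4 := by
    rw [div_le_div_iff₀ (by linarith) (by norm_num)]
    linarith
  rw [log_mul two_ne_zero (by linarith)]
  norm_num at hlog2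
  linarith

/-- For positive reals `α, β` and every real `r`:
if `r ≤ α ln(1 + r) + β` then `r ≤ 2α ln(e + α) + 2β`. -/
theorem log_inequality_inversion' (α β : ℝ) (hα : 0 < α) (hβ : 0 < β) (r : ℝ)
    (h : r ≤ α * Real.log (1 + r) + β) :
    r ≤ 2 * α * Real.log (Real.exp 1 + α) + 2 * β := by
  have hlog : 0 < log (exp 1 + α) := log_pos (by linarith [exp_one_gt_two])
  rcases le_or_gt r 0 with hr | hr
  · linarith [mul_pos hα hlog]
  set c := 2 * (exp 1 + α) with hc_def
  have hc : 0 < c := by positivity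
  have bound := one_sub_div_mul_le_of_le_mul_log_one_add hα.le hc (by linarith) h
  have hlogc := log_two_mul_add_one_div_sub_one_le (a := exp 1 + α) (by linarith [exp_one_gt_two])
  have half_le : 1 / 2 ≤ 1 - α / c := by
    rw [le_sub_comm, div_le_iff₀ hc, hc_def]
    linarith [exp_one_gt_two]
  linarith [mul_le_mul_of_nonneg_left hlogc hα.le, mul_le_mul_of_nonneg_right half_le hr.le]
end
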